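/- arXiv:1406.6257 — 2 statements merged into one kernel-verified Lean document; each statement's English description precedes it below -/
import Mathlib

section
/- Let 𝖧, 𝖦₁,…,𝖦_m be real Hilbert spaces; for each i ∈ {1,…,m} let 𝖴 ⊆ 𝖧 and 𝖵ᵢ ⊆ 𝖦ᵢ be closed vector subspaces, let 𝖠 : 𝖧 → 2^𝖧 and 𝖡ᵢ : 𝖦ᵢ → 2^{𝖦ᵢ} be maximally monotone, let 𝖫ᵢ : 𝖧 → 𝖦ᵢ be bounded linear, let 𝖣ᵢ : 𝖦ᵢ → 2^{𝖦ᵢ} be monotone such that its partial inverse (𝖣ᵢ)_{𝖵ᵢ⊥} is single-valued, everywhere defined, and νᵢ-Lipschitzian, let 𝖢 : 𝖧 → 𝖧 be monotone and μ-Lipschitzian, let 𝗓 ∈ 𝖧, and let 𝖻ᵢ ∈ 𝖦ᵢ. In H = 𝖧 ⊕ 𝖦₁ ⊕ ⋯ ⊕ 𝖦_m define A : (x,u₁,…,u_m) ↦ (−𝗓 + 𝖠x) × (P_{𝖵₁}𝖻₁ + (𝖡₁)_{𝖵₁⊥}u₁) × ⋯ × (P_{𝖵_m}𝖻_m + (𝖡_m)_{𝖵_m⊥}u_m),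 L : (x,u₁,…,u_m) ↦ (Σᵢ 𝖫ᵢ* P_{𝖵ᵢ}uᵢ, −P_{𝖵₁}𝖫₁x, …, −P_{𝖵_m}𝖫_m x), C : (x,u₁,…,u_m) ↦ (𝖢x, (𝖣₁)_{𝖵₁⊥}u₁, …, (𝖣_m)_{𝖵_m⊥}u_m), B = C + L, and W = 𝖴 × 𝖵₁ × ⋯ × 𝖵_m. Let 𝒫 be the set of x ∈ 𝖧 with 𝗓 ∈ 𝖠x + N_𝖴 x + Σᵢ 𝖫ᵢ* P_{𝖵ᵢ}(𝖡ᵢ ⊡_{𝖵ᵢ⊥} 𝖣ᵢ + N_{𝖵ᵢ}) P_{𝖵ᵢ}(𝖫ᵢx − 𝖻ᵢ) + 𝖢x, and let 𝒟 be the set of (u₁,…,u_m) ∈ 𝖦₁ × ⋯ × 𝖦_m for which there exists x ∈ 𝖧 with 𝗓 − Σᵢ 𝖫ᵢ* P_{𝖵ᵢ}uᵢ ∈ 𝖠x + 𝖢x + N_𝖴 x and uᵢ ∈ P_{𝖵ᵢ}(𝖡ᵢ ⊡_{𝖵ᵢ⊥} 𝖣ᵢ + N_{𝖵ᵢ}) P_{𝖵ᵢ}(𝖫ᵢx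 − 𝖻ᵢ) for every i. Then zer(A + B + N_W) ⊆ 𝒫 × 𝒟. -/
/-!
Let `z = (x, u₁, …, u_m)` be a zero of `A + B + N_W`, with normal-cone part `w ∈ Wᗮ`; then
`x ∈ U`, `uᵢ ∈ Vᵢ`, `w₀ ∈ Uᗮ` and `wᵢ ∈ Vᵢᗮ`. The first row reads
`z₀ - ∑ Lᵢ* uᵢ ∈ A x + C x + N_U x`. The `i`-th row reads `cᵢ + dᵢ + wᵢ = P_{Vᵢ}(Lᵢ x - bᵢ)` with
`cᵢ ∈ (Bᵢ)_{Vᵢᗮ} uᵢ` and `dᵢ = (Dᵢ)_{Vᵢᗮ} uᵢ`. The partial inverse `(·)_{Vᵢᗮ}` exchanges the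
`Vᵢ`-components of argument and value, so this says `uᵢ - wᵢ ∈ (Bᵢ ⊡_{Vᵢᗮ} Dᵢ)(P_{Vᵢ}(Lᵢ x - bᵢ))`, and
`P_{Vᵢ}(uᵢ - wᵢ) = uᵢ`. Thus `u` is a dual solution witnessed by `x`, and `x` is a primal solution
because the first row can be rearranged as `z₀ ∈ A x + N_U x + ∑ Lᵢ* uᵢ + C x`.
-/

open scoped Pointwise RealInnerProductSpace
open Finset

noncomputable section

/-- A set-valued operator is monotone. -/
def MonotoneSV {F : Type*} [NormedAddCommGroup F] [InnerProductSpace ℝ F]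
    (A : F → Set F) : Prop :=
  ∀ ⦃x y u v : F⦄, u ∈ A x → v ∈ A y → 0 ≤ ⟪x - y, u - v⟫

/-- A set-valued operator is maximally monotone. -/
def MaxMonotone {F : Type*} [NormedAddCommGroup F] [InnerProductSpace ℝ F]
    (A : F → Set F) : Prop :=
  MonotoneSV A ∧ ∀ x u : F, (∀ y v, v ∈ A y → 0 ≤ ⟪x - y, u - v⟫) → u ∈ A x

/-- The partial inverse of a set-valued operator with respect to a closed subspace. -/
def partialInv {F : Type*} [NormedAddCommGroup F] [InnerProductSpace ℝ F]
    (V : Submodule ℝ F) [Submodule.HasOrthogonalProjection V] (A : F → Set F) :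
    F → Set F := fun x =>
  {y | (Submodule.orthogonalProjectionOnto V y : F) + (Submodule.orthogonalProjectionOnto Vᗮ x : F)
      ∈ A ((Submodule.orthogonalProjectionOnto V x : F) + (Submodule.orthogonalProjectionOnto Vᗮ y : F))}

/-- The normal cone to a closed subspace. -/
def normalConeSub {F : Type*} [NormedAddCommGroup F] [InnerProductSpace ℝ F]
    (V : Submodule ℝ F) : F → Set F := fun x => {u | x ∈ V ∧ u ∈ Vᗮ}

/-- The partial sum of two set-valued operators with respect to a closed subspace:
`A ⊡_U B = ((A_U + B_U))_U`. -/
def partialSum {F : Type*} [NormedAddCommGroup F] [InnerProductSpace ℝ F]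
    (U : Submodule ℝ F) [Submodule.HasOrthogonalProjection U] (A B : F → Set F) :
    F → Set F :=
  partialInv U (fun x => partialInv U A x + partialInv U B x)

namespace Submodule

variable {F : Type*} [NormedAddCommGroup F] [InnerProductSpace ℝ F]
  {K : Submodule ℝ F} [K.HasOrthogonalProjection]

theorem coe_orthogonalProjectionOnto_of_mem {v : F} (hv : v ∈ K) :
    (K.orthogonalProjectionOnto v : F) = v := by
  rw [← starProjection_apply, starProjection_eq_self_iff.2 hv]

theorem coe_orthogonalProjectionOnto_add {p s : F} (hp : p ∈ K) (hs : s ∈ Kᗮ) :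
    (K.orthogonalProjectionOnto (p + s) : F) = p := by
  rw [← starProjection_apply]
  exact eq_starProjection_of_mem_orthogonal' hp hs rfl

end Submodule

open Submodule

section PartialInverse

variable {F : Type*} [NormedAddCommGroup F] [InnerProductSpace ℝ F]

theorem add_mem_partialInv_add_iff {K : Submodule ℝ F} [K.HasOrthogonalProjection]
    {A : F → Set F} {p r s t : F} (hp : p ∈ K) (hr : r ∈ K) (hs : s ∈ Kᗮ) (ht : t ∈ Kᗮ) :
    p + t ∈ partialInv K A (r + s) ↔ p + s ∈ A (r + t) := by
  have hK : ∀ {x y : F}, x ∈ K → y ∈ Kᗮ → (Kᗮ.orthogonalProjectionOnto (x + y) : F) = y :=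
    fun hx hy => by
      rw [add_comm]; exact coe_orthogonalProjectionOnto_add hy (K.le_orthogonal_orthogonal hx)
  simp only [partialInv, Set.mem_ofPred_eq, coe_orthogonalProjectionOnto_add hp ht,
    coe_orthogonalProjectionOnto_add hr hs, hK hp ht, hK hr hs]

theorem mem_image_partialSum_add_normalConeSub {V : Submodule ℝ F} [V.HasOrthogonalProjection]
    {B D : F → Set F} {u w q c d : F} (hu : u ∈ V) (hw : w ∈ Vᗮ) (hq : q ∈ V)
    (hc : c ∈ partialInv Vᗮ B u) (hd : d ∈ partialInv Vᗮ D u) (h : c + d + w = q) :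
    u ∈ (fun y => (V.orthogonalProjectionOnto y : F)) ''
      (partialSum Vᗮ B D q + normalConeSub V q) := by
  have hS : -w + u ∈ partialSum Vᗮ B D q := by
    have := add_mem_partialInv_add_iff (A := fun x => partialInv Vᗮ B x + partialInv Vᗮ D x)
      (neg_mem hw) (zero_mem _) (V.le_orthogonal_orthogonal hq)
      (V.le_orthogonal_orthogonal hu)
    rw [zero_add, zero_add] at this
    refine this.2 ?_
    rw [← h, neg_add_eq_sub, add_sub_cancel_right]
    exact Set.add_mem_add hc hd
  refine ⟨-w + u + 0, Set.add_mem_add hS ⟨hq, zero_mem _⟩, ?_⟩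
  simp only [add_zero, add_comm (-w)]
  exact coe_orthogonalProjectionOnto_add hu (neg_mem hw)

theorem mem_image_partialSum_of_add_eq_zero {V : Submodule ℝ F} [V.HasOrthogonalProjection]
    {B D : F → Set F} {u w a d l b : F} (hu : u ∈ V) (hw : w ∈ Vᗮ)
    (ha : a ∈ {(V.orthogonalProjectionOnto b : F)} + partialInv Vᗮ B u)
    (hd : partialInv Vᗮ D u = {d}) (h : a + (d - V.orthogonalProjectionOnto l) + w = 0) :
    u ∈ (fun y => (V.orthogonalProjectionOnto y : F)) ''
      (partialSum Vᗮ B D (V.orthogonalProjectionOnto (l - b))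
        + normalConeSub V (V.orthogonalProjectionOnto (l - b))) := by
  obtain ⟨_, rfl, c, hc, rfl⟩ := ha
  refine mem_image_partialSum_add_normalConeSub hu hw (coe_mem _) hc (by rw [hd]; rfl) ?_
  dsimp only at h
  rw [map_sub, Submodule.coe_sub]
  linear_combination (norm := abel) h

end PartialInverse

theorem mem_orthogonal_of_inner_add_sum_inner_eq_zero {ι : Type*} [Fintype ι]
    {E : Type*} [NormedAddCommGroup E] [InnerProductSpace ℝ E]
    {G : ι → Type*} [∀ i, NormedAddCommGroup (G i)] [∀ i, InnerProductSpace ℝ (G i)]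
    {U : Submodule ℝ E} {V : ∀ i, Submodule ℝ (G i)} {w : E × ∀ i, G i}
    (h : ∀ v : E × ∀ i, G i, (v.1 ∈ U ∧ ∀ i, v.2 i ∈ V i) →
      ⟪v.1, w.1⟫ + ∑ i, ⟪v.2 i, w.2 i⟫ = 0) :
    w.1 ∈ Uᗮ ∧ ∀ i, w.2 i ∈ (V i)ᗮ := by
  classical
  refine ⟨fun x hx => ?_, fun i g hg => ?_⟩
  · simpa using h (x, 0) ⟨hx, fun i => zero_mem _⟩
  · have hmem : ∀ j, (Pi.single i g : ∀ j, G j) j ∈ V j := fun j => by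
      rcases eq_or_ne j i with rfl | hne
      · simpa using hg
      · simp [Pi.single_eq_of_ne hne]
    have hsum : ∑ j, ⟪(Pi.single i g : ∀ j, G j) j, w.2 j⟫ = ⟪g, w.2 i⟫ :=
      (Fintype.sum_eq_single i fun j hj => by simp [Pi.single_eq_of_ne hj]).trans (by simp)
    simpa [hsum] using h (0, Pi.single i g) ⟨zero_mem _, hmem⟩

variable {m : ℕ} {E : Type*} [NormedAddCommGroup E] [InnerProductSpace ℝ E]
  [CompleteSpace E]
  {G : Fin m → Type*} [∀ i, NormedAddCommGroup (G i)] [∀ i, InnerProductSpace ℝ (G i)]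
  [∀ i, CompleteSpace (G i)]

theorem stmt16_general (U : Submodule ℝ E)
    (V : ∀ i, Submodule ℝ (G i)) [∀ i, CompleteSpace (V i)]
    (A : E → Set E)
    (B : ∀ i, G i → Set (G i))
    (L : ∀ i, E →L[ℝ] G i)
    (D : ∀ i, G i → Set (G i))
    (Dp : ∀ i, G i → G i)
    (hDp : ∀ i x, partialInv (V i)ᗮ (D i) x = {Dp i x})
    (C : E → E)
    (z₀ : E) (b : ∀ i, G i)
    -- the big operators on `H = E ⊕ G₁ ⊕ ⋯ ⊕ G_m`:
    (bigA : (E × ∀ i, G i) → Set (E × ∀ i, G i))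
    (hbigA : ∀ z, bigA z = {u | u.1 ∈ {-z₀} + A z.1 ∧
        ∀ i, u.2 i ∈ {(Submodule.orthogonalProjectionOnto (V i) (b i) : G i)}
            + partialInv (V i)ᗮ (B i) (z.2 i)})
    (bigB : (E × ∀ i, G i) → (E × ∀ i, G i))
    (hbigB : ∀ z, bigB z =
        (C z.1 + ∑ i, (L i).adjoint (Submodule.orthogonalProjectionOnto (V i) (z.2 i) : G i),
         fun i => Dp i (z.2 i) - (Submodule.orthogonalProjectionOnto (V i) (L i z.1) : G i)))
    -- the normal cone to `W = U × V₁ × ⋯ × V_m` (whose orthogonal complement is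
    -- taken with respect to the direct-sum inner product):
    (NW : (E × ∀ i, G i) → Set (E × ∀ i, G i))
    (hNW : ∀ z, NW z = {w | (z.1 ∈ U ∧ ∀ i, z.2 i ∈ V i) ∧
        ∀ v : E × ∀ i, G i, (v.1 ∈ U ∧ ∀ i, v.2 i ∈ V i) →
          ⟪v.1, w.1⟫ + ∑ i, ⟪v.2 i, w.2 i⟫ = 0})
    -- the primal and dual solution sets:
    (P : Set E)
    (hP : P = {x | z₀ ∈ A x + normalConeSub U x
        + (∑ i, (fun w => (L i).adjoint (Submodule.orthogonalProjectionOnto (V i) w : G i)) ''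
            (partialSum (V i)ᗮ (B i) (D i)
                (Submodule.orthogonalProjectionOnto (V i) (L i x - b i) : G i)
              + normalConeSub (V i)
                (Submodule.orthogonalProjectionOnto (V i) (L i x - b i) : G i)))
        + {C x}})
    (Dual : Set (∀ i, G i))
    (hDual : Dual = {u | ∃ x : E,
        z₀ - ∑ i, (L i).adjoint (Submodule.orthogonalProjectionOnto (V i) (u i) : G i)
          ∈ A x + {C x} + normalConeSub U x ∧
        ∀ i, u i ∈ (fun w => (Submodule.orthogonalProjectionOnto (V i) w : G i)) ''
            (partialSum (V i)ᗮ (B i) (D i)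
                (Submodule.orthogonalProjectionOnto (V i) (L i x - b i) : G i)
              + normalConeSub (V i)
                (Submodule.orthogonalProjectionOnto (V i) (L i x - b i) : G i))}) :
    ∀ z : E × ∀ i, G i,
      (0 : E × ∀ i, G i) ∈ bigA z + {bigB z} + NW z → z.1 ∈ P ∧ z.2 ∈ Dual := by
  intro z hz
  obtain ⟨_, ⟨a, ha, _, rfl, rfl⟩, w, hw, h0⟩ := hz
  rw [hbigA] at ha
  obtain ⟨⟨_, rfl, a₀, ha₀, ha₁⟩, ha₂⟩ := ha
  rw [hNW] at hw
  obtain ⟨⟨hzU, hzV⟩, hw⟩ := hw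
  obtain ⟨hwU, hwV⟩ := mem_orthogonal_of_inner_add_sum_inner_eq_zero hw
  have hNU : w.1 ∈ normalConeSub U z.1 := ⟨hzU, hwU⟩
  rw [hbigB] at h0
  set s := ∑ i, (L i).adjoint ((V i).orthogonalProjectionOnto (z.2 i) : G i)
  have hE : a.1 + (C z.1 + s) + w.1 = 0 := congrArg Prod.fst h0
  dsimp only at ha₁
  have hdual : ∀ i, z.2 i ∈ (fun y => ((V i).orthogonalProjectionOnto y : G i)) ''
      (partialSum (V i)ᗮ (B i) (D i) ((V i).orthogonalProjectionOnto (L i z.1 - b i) : G i)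
        + normalConeSub (V i) ((V i).orthogonalProjectionOnto (L i z.1 - b i) : G i)) := fun i =>
    mem_image_partialSum_of_add_eq_zero (hzV i) (hwV i) (ha₂ i) (hDp i _)
      (congrFun (congrArg Prod.snd h0) i)
  refine ⟨?_, ?_⟩
  · have hz₀ : z₀ = a₀ + w.1 + s + C z.1 := by linear_combination (norm := abel) -ha₁ - hE
    rw [hP, Set.mem_ofPred_eq, hz₀]
    refine Set.add_mem_add (Set.add_mem_add (Set.add_mem_add ha₀ hNU)
      (Set.finsetSum_mem_finsetSum _ _ _ fun i _ => ?_)) rfl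
    obtain ⟨y, hy, hPy⟩ := hdual i
    exact ⟨y, hy, by simp only [hPy, coe_orthogonalProjectionOnto_of_mem (hzV i)]⟩
  · have hz₀ : z₀ - s = a₀ + C z.1 + w.1 := by linear_combination (norm := abel) -ha₁ - hE
    rw [hDual]
    exact ⟨z.1, hz₀ ▸ Set.add_mem_add (Set.add_mem_add ha₀ rfl) hNU, hdual⟩

theorem stmt16 (U : Submodule ℝ E) [CompleteSpace U]
    (V : ∀ i, Submodule ℝ (G i)) [∀ i, CompleteSpace (V i)]
    (A : E → Set E) (hA : MaxMonotone A)
    (B : ∀ i, G i → Set (G i)) (hB : ∀ i, MaxMonotone (B i))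
    (L : ∀ i, E →L[ℝ] G i)
    (D : ∀ i, G i → Set (G i)) (hD : ∀ i, MonotoneSV (D i))
    (ν : Fin m → ℝ) (hν : ∀ i, 0 < ν i)
    (Dp : ∀ i, G i → G i)
    (hDp : ∀ i x, partialInv (V i)ᗮ (D i) x = {Dp i x})
    (hDplip : ∀ i (x y : G i), ‖Dp i x - Dp i y‖ ≤ ν i * ‖x - y‖)
    (C : E → E) (μ : ℝ) (hμ : 0 < μ)
    (hCmono : ∀ x y : E, 0 ≤ ⟪x - y, C x - C y⟫)
    (hClip : ∀ x y : E, ‖C x - C y‖ ≤ μ * ‖x - y‖)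
    (z₀ : E) (b : ∀ i, G i)
    -- the big operators on `H = E ⊕ G₁ ⊕ ⋯ ⊕ G_m`:
    (bigA : (E × ∀ i, G i) → Set (E × ∀ i, G i))
    (hbigA : ∀ z, bigA z = {u | u.1 ∈ {-z₀} + A z.1 ∧
        ∀ i, u.2 i ∈ {(Submodule.orthogonalProjectionOnto (V i) (b i) : G i)}
            + partialInv (V i)ᗮ (B i) (z.2 i)})
    (bigB : (E × ∀ i, G i) → (E × ∀ i, G i))
    (hbigB : ∀ z, bigB z =
        (C z.1 + ∑ i, (L i).adjoint (Submodule.orthogonalProjectionOnto (V i) (z.2 i) : G i),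
         fun i => Dp i (z.2 i) - (Submodule.orthogonalProjectionOnto (V i) (L i z.1) : G i)))
    -- the normal cone to `W = U × V₁ × ⋯ × V_m` (whose orthogonal complement is
    -- taken with respect to the direct-sum inner product):
    (NW : (E × ∀ i, G i) → Set (E × ∀ i, G i))
    (hNW : ∀ z, NW z = {w | (z.1 ∈ U ∧ ∀ i, z.2 i ∈ V i) ∧
        ∀ v : E × ∀ i, G i, (v.1 ∈ U ∧ ∀ i, v.2 i ∈ V i) →
          ⟪v.1, w.1⟫ + ∑ i, ⟪v.2 i, w.2 i⟫ = 0})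
    -- the primal and dual solution sets:
    (P : Set E)
    (hP : P = {x | z₀ ∈ A x + normalConeSub U x
        + (∑ i, (fun w => (L i).adjoint (Submodule.orthogonalProjectionOnto (V i) w : G i)) ''
            (partialSum (V i)ᗮ (B i) (D i)
                (Submodule.orthogonalProjectionOnto (V i) (L i x - b i) : G i)
              + normalConeSub (V i)
                (Submodule.orthogonalProjectionOnto (V i) (L i x - b i) : G i)))
        + {C x}})
    (Dual : Set (∀ i, G i))
    (hDual : Dual = {u | ∃ x : E,
        z₀ - ∑ i, (L i).adjoint (Submodule.orthogonalProjectionOnto (V i) (u i) : G i)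
          ∈ A x + {C x} + normalConeSub U x ∧
        ∀ i, u i ∈ (fun w => (Submodule.orthogonalProjectionOnto (V i) w : G i)) ''
            (partialSum (V i)ᗮ (B i) (D i)
                (Submodule.orthogonalProjectionOnto (V i) (L i x - b i) : G i)
              + normalConeSub (V i)
                (Submodule.orthogonalProjectionOnto (V i) (L i x - b i) : G i))}) :
    ∀ z : E × ∀ i, G i,
      (0 : E × ∀ i, G i) ∈ bigA z + {bigB z} + NW z → z.1 ∈ P ∧ z.2 ∈ Dual :=
  stmt16_general U V A B L D Dp hDp C z₀ b bigA hbigA bigB hbigB NW hNW P hP Dual hDual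
end
end

section
/- Let 𝖧, 𝖦₁,…,𝖦_m be real Hilbert spaces; for each i ∈ {1,…,m} let 𝖴 ⊆ 𝖧 and 𝖵ᵢ ⊆ 𝖦ᵢ be closed vector subspaces, let 𝖠 : 𝖧 → 2^𝖧 and 𝖡ᵢ : 𝖦ᵢ → 2^{𝖦ᵢ} be maximally monotone, let 𝖫ᵢ : 𝖧 → 𝖦ᵢ be bounded linear, let 𝖣ᵢ : 𝖦ᵢ → 2^{𝖦ᵢ} be monotone such that its partial inverse (𝖣ᵢ)_{𝖵ᵢ⊥} is single-valued, everywhere defined, and νᵢ-Lipschitzian, let 𝖢 : 𝖧 → 𝖧 be monotone and μ-Lipschitzian, let 𝗓 ∈ 𝖧, and let 𝖻ᵢ ∈ 𝖦ᵢ. With A, B = C + L, W, 𝒫, 𝒟 defined as follows: in H = 𝖧 ⊕ 𝖦₁ ⊕ ⋯ ⊕ 𝖦_m, A : (x,u₁,…,u_m) ↦ (−𝗓 + 𝖠x) × (P_{𝖵₁}𝖻₁ + (𝖡₁)_{𝖵₁⊥}u₁) × ⋯ × (P_{𝖵_m}𝖻_m + (𝖡_m)_{𝖵_m⊥}u_m);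 L : (x,u₁,…,u_m) ↦ (Σᵢ 𝖫ᵢ* P_{𝖵ᵢ}uᵢ, −P_{𝖵₁}𝖫₁x, …, −P_{𝖵_m}𝖫_m x); C : (x,u₁,…,u_m) ↦ (𝖢x, (𝖣₁)_{𝖵₁⊥}u₁, …, (𝖣_m)_{𝖵_m⊥}u_m); W = 𝖴 × 𝖵₁ × ⋯ × 𝖵_m; 𝒫 the set of x ∈ 𝖧 with 𝗓 ∈ 𝖠x + N_𝖴 x + Σᵢ 𝖫ᵢ* P_{𝖵ᵢ}(𝖡ᵢ ⊡_{𝖵ᵢ⊥} 𝖣ᵢ + N_{𝖵ᵢ}) P_{𝖵ᵢ}(𝖫ᵢx − 𝖻ᵢ) + 𝖢x; and 𝒟 the set of (u₁,…,u_m) for which there exists x ∈ 𝖧 with 𝗓 − Σᵢ 𝖫ᵢ* P_{𝖵ᵢ}uᵢ ∈ 𝖠x + 𝖢x + N_𝖴 x and uᵢ ∈ P_{𝖵ᵢ}(𝖡ᵢ ⊡_{𝖵ᵢ⊥} 𝖣ᵢ + N_{𝖵ᵢ}) P_{𝖵ᵢ}(𝖫ᵢx − 𝖻ᵢ) for every i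 — the following are equivalent: 𝒫 ≠ ∅; zer(A + B + N_W) ≠ ∅; 𝒟 ≠ ∅. -/
/-!
All three sets are projections of the set of Kuhn–Tucker pairs `(x, u)`, defined by
`z₀ - ∑ Lᵢ* P_{Vᵢ} uᵢ ∈ A x + C x + N_U x` and
`uᵢ ∈ P_{Vᵢ} ((Bᵢ ⊡_{Vᵢ⊥} Dᵢ + N_{Vᵢ}) (P_{Vᵢ} (Lᵢ x - bᵢ)))`.
For `𝒟` this is its definition, and for `𝒫` it follows from `Lᵢ* P_{Vᵢ} = Lᵢ* P_{Vᵢ} P_{Vᵢ}`.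
A zero `(x, u)` of `A + B + N_W` lies in `W`, where `N_W` is `U⊥ × V₁⊥ × ⋯ × V_m⊥`, so it can be
read off coordinatewise; the coordinates match because, for `p ∈ V` and a single-valued
`D_{V⊥} = Dp`, the set `P_V ((B ⊡_{V⊥} D) p)` consists of the `u ∈ V` with
`p - Dp u ∈ B_{V⊥} u + V⊥`.
-/

open scoped Pointwise RealInnerProductSpace
open Finset

noncomputable section

namespace Set

lemma mem_sum_image_iff {M ι : Type*} [AddCommMonoid M] [Fintype ι] {α : ι → Type*}
    (f : ∀ i, α i → M) (S : ∀ i, Set (α i)) (y : M) :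
    y ∈ ∑ i, f i '' S i ↔ ∃ u : ∀ i, α i, (∀ i, u i ∈ S i) ∧ ∑ i, f i (u i) = y := by
  rw [mem_fintype_sum]
  constructor
  · rintro ⟨g, hg, rfl⟩
    choose u hu hfu using hg
    exact ⟨u, hu, by simp only [hfu]⟩
  · rintro ⟨u, hu, rfl⟩
    exact ⟨fun i => f i (u i), fun i => mem_image_of_mem _ (hu i), rfl⟩

variable {M : Type*} [AddCommGroup M]

lemma mem_add_iff_exists_sub_mem {s t : Set M} {a : M} : a ∈ s + t ↔ ∃ x ∈ s, a - x ∈ t := by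
  simp only [mem_add, ← eq_sub_iff_add_eq', exists_eq_right]

lemma mem_singleton_add_iff_sub_mem {s : Set M} {a y : M} : y ∈ {a} + s ↔ y - a ∈ s := by
  simp [singleton_add, image_add_left, neg_add_eq_sub]

end Set

lemma zero_mem_setOf_add_singleton_add_setOf_iff {ι M : Type*} {N : ι → Type*} [AddCommGroup M]
    [∀ i, AddCommGroup (N i)] (X X' : Set M) (Y Y' : ∀ i, Set (N i)) (c : M × ∀ i, N i) :
    (0 : M × ∀ i, N i) ∈ {a : M × ∀ i, N i | a.1 ∈ X ∧ ∀ i, a.2 i ∈ Y i} + {c}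
        + {w : M × ∀ i, N i | w.1 ∈ X' ∧ ∀ i, w.2 i ∈ Y' i}
      ↔ -c.1 ∈ X + X' ∧ ∀ i, -c.2 i ∈ Y i + Y' i := by
  constructor
  · rintro ⟨_, ⟨a, ⟨ha₁, ha₂⟩, _, rfl, rfl⟩, w, ⟨hw₁, hw₂⟩, h⟩
    rw [Prod.ext_iff, funext_iff] at h
    refine ⟨⟨a.1, ha₁, w.1, hw₁, ?_⟩, fun i => ⟨a.2 i, ha₂ i, w.2 i, hw₂ i, ?_⟩⟩
    · simpa [eq_neg_iff_add_eq_zero, add_right_comm] using h.1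
    · simpa [eq_neg_iff_add_eq_zero, add_right_comm] using h.2 i
  · rintro ⟨⟨a₁, ha₁, w₁, hw₁, h₁⟩, h₂⟩
    choose a₂ ha₂ w₂ hw₂ h₂ using h₂
    refine ⟨(a₁, a₂) + c, Set.add_mem_add ⟨ha₁, ha₂⟩ rfl, (w₁, w₂), ⟨hw₁, hw₂⟩, ?_⟩
    ext i
    · simp only [Prod.fst_add, Prod.fst_zero, add_right_comm a₁, h₁, neg_add_cancel]
    · simp only [Prod.snd_add, Pi.add_apply, Prod.snd_zero, Pi.zero_apply, add_right_comm (a₂ i),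
        h₂ i, neg_add_cancel]

namespace Submodule

variable {F : Type*} [NormedAddCommGroup F] [InnerProductSpace ℝ F] (V : Submodule ℝ F)

lemma normalConeSub_of_mem {x : F} (hx : x ∈ V) : normalConeSub V x = Vᗮ := by
  ext; simp [normalConeSub, hx]

lemma mem_orthogonal_prod_pi_iff {ι : Type*} [Fintype ι] [DecidableEq ι] {G : ι → Type*}
    [∀ i, NormedAddCommGroup (G i)] [∀ i, InnerProductSpace ℝ (G i)]
    (W : ∀ i, Submodule ℝ (G i)) (w : F × ∀ i, G i) :
    (∀ v : F × ∀ i, G i, (v.1 ∈ V ∧ ∀ i, v.2 i ∈ W i) → ⟪v.1, w.1⟫ + ∑ i, ⟪v.2 i, w.2 i⟫ = 0)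
      ↔ w.1 ∈ Vᗮ ∧ ∀ i, w.2 i ∈ (W i)ᗮ := by
  constructor
  · intro h
    refine ⟨fun v hv => by simpa using h (v, 0) ⟨hv, fun i => zero_mem _⟩, fun i v hv => ?_⟩
    have hsingle : ∀ j, Pi.single i v j ∈ W j := by
      intro j
      rcases eq_or_ne j i with rfl | hji
      · simpa using hv
      · simp [Pi.single_eq_of_ne hji]
    have hsum : ∑ j, ⟪Pi.single i v j, w.2 j⟫ = ⟪v, w.2 i⟫ :=
      (Fintype.sum_eq_single i fun j hj => by simp [Pi.single_eq_of_ne hj]).trans (by simp)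
    simpa [hsum] using h (0, Pi.single i v) ⟨zero_mem _, hsingle⟩
  · rintro ⟨h₁, h₂⟩ v ⟨hv₁, hv₂⟩
    rw [inner_right_of_mem_orthogonal hv₁ h₁, zero_add]
    exact Finset.sum_eq_zero fun i _ => inner_right_of_mem_orthogonal (hv₂ i) (h₂ i)

variable [V.HasOrthogonalProjection]

lemma coe_orthogonalProjectionOnto_orthogonal_orthogonal (x : F) :
    (Vᗮᗮ.orthogonalProjectionOnto x : F) = V.orthogonalProjectionOnto x := by
  simp only [← starProjection_apply, starProjection_orthogonal_val, sub_sub_cancel]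

lemma image_orthogonalProjectionOnto_add_orthogonal (S : Set F) :
    (fun w => (V.orthogonalProjectionOnto w : F)) '' (S + Vᗮ)
      = (fun w => (V.orthogonalProjectionOnto w : F)) '' S := by
  ext u
  constructor
  · rintro ⟨_, ⟨s, hs, n, hn, rfl⟩, rfl⟩
    exact ⟨s, hs, by simp [orthogonalProjectionOnto_apply_of_mem_orthogonal hn]⟩
  · rintro ⟨s, hs, rfl⟩
    exact ⟨s, ⟨s, hs, 0, Vᗮ.zero_mem, add_zero s⟩, rfl⟩

variable {B D : F → Set F}

lemma mem_partialSum_orthogonal_iff {p s : F} (hp : p ∈ V) :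
    s ∈ partialSum Vᗮ B D p ↔ (Vᗮ.orthogonalProjectionOnto s : F) + p ∈
      partialInv Vᗮ B (V.orthogonalProjectionOnto s) + partialInv Vᗮ D (V.orthogonalProjectionOnto s) := by
  have hpV : (V.orthogonalProjectionOnto p : F) = p := starProjection_eq_self_iff.mpr hp
  have hpVperp : (Vᗮ.orthogonalProjectionOnto p : F) = 0 := by
    rw [orthogonalProjectionOnto_orthogonal_apply_eq_zero hp, coe_zero]
  simp only [partialSum, partialInv, Set.mem_ofPred_eq,
    coe_orthogonalProjectionOnto_orthogonal_orthogonal, hpV, hpVperp, zero_add]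

lemma mem_image_partialSum_orthogonal_iff {Dp : F → F} (hDp : ∀ x, partialInv Vᗮ D x = {Dp x})
    {p u : F} (hp : p ∈ V) :
    u ∈ (fun s => (V.orthogonalProjectionOnto s : F)) '' partialSum Vᗮ B D p ↔
      u ∈ V ∧ p - Dp u ∈ partialInv Vᗮ B u + Vᗮ := by
  simp only [Set.mem_image, mem_partialSum_orthogonal_iff V hp, hDp, Set.add_singleton,
    Set.image_add_right, Set.mem_preimage, ← starProjection_apply]
  constructor
  · rintro ⟨s, hs, rfl⟩
    refine ⟨starProjection_apply_mem V s, _, hs, -Vᗮ.starProjection s,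
      neg_mem (starProjection_apply_mem Vᗮ s), ?_⟩
    dsimp only
    abel
  · rintro ⟨hu, y, hy, n, hn, hyn⟩
    have hPn : V.starProjection n = 0 := (starProjection_apply_eq_zero_iff V).mpr hn
    have hPu : V.starProjection u = u := starProjection_eq_self_iff.mpr hu
    refine ⟨u - n, ?_, by simp [hPn, hPu]⟩
    simp only [map_sub, hPn, hPu, sub_zero, starProjection_orthogonal_val]
    convert hy using 1
    rw [eq_sub_iff_add_eq.mpr hyn]
    abel

end Submodule

section KuhnTucker

variable {ι : Type*} [Fintype ι] {E : Type*} [NormedAddCommGroup E] [InnerProductSpace ℝ E]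
  [CompleteSpace E] {G : ι → Type*} [∀ i, NormedAddCommGroup (G i)]
  [∀ i, InnerProductSpace ℝ (G i)] [∀ i, CompleteSpace (G i)]
  (U : Submodule ℝ E) (V : ∀ i, Submodule ℝ (G i)) [∀ i, (V i).HasOrthogonalProjection]
  (A : E → Set E) (B D : ∀ i, G i → Set (G i)) (L : ∀ i, E →L[ℝ] G i) (C : E → E) (z₀ : E)
  (b : ∀ i, G i)

def IsKuhnTuckerPair (x : E) (u : ∀ i, G i) : Prop :=
  z₀ - ∑ i, (L i).adjoint (Submodule.orthogonalProjectionOnto (V i) (u i) : G i)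
      ∈ A x + {C x} + normalConeSub U x ∧
    ∀ i, u i ∈ (fun w => (Submodule.orthogonalProjectionOnto (V i) w : G i)) ''
      (partialSum (V i)ᗮ (B i) (D i)
          (Submodule.orthogonalProjectionOnto (V i) (L i x - b i) : G i)
        + normalConeSub (V i) (Submodule.orthogonalProjectionOnto (V i) (L i x - b i) : G i))

variable {U V A B D L C z₀ b} in
lemma IsKuhnTuckerPair.mem {x : E} {u : ∀ i, G i}
    (h : IsKuhnTuckerPair U V A B D L C z₀ b x u) : x ∈ U ∧ ∀ i, u i ∈ V i := by
  obtain ⟨⟨_, _, n, hn, _⟩, hu⟩ := h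
  refine ⟨hn.1, fun i => ?_⟩
  obtain ⟨w, -, hw⟩ := hu i
  rw [← hw]
  exact Submodule.coe_mem _

lemma mem_primal_iff_exists_isKuhnTuckerPair (x : E) :
    z₀ ∈ A x + normalConeSub U x
        + (∑ i, (fun w => (L i).adjoint (Submodule.orthogonalProjectionOnto (V i) w : G i)) ''
            (partialSum (V i)ᗮ (B i) (D i)
                (Submodule.orthogonalProjectionOnto (V i) (L i x - b i) : G i)
              + normalConeSub (V i)
                (Submodule.orthogonalProjectionOnto (V i) (L i x - b i) : G i)))
        + {C x} ↔ ∃ u, IsKuhnTuckerPair U V A B D L C z₀ b x u := by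
  have himage : ∀ i (T : Set (G i)),
      (fun w => (L i).adjoint (Submodule.orthogonalProjectionOnto (V i) w : G i)) '' T =
        (fun v => (L i).adjoint (Submodule.orthogonalProjectionOnto (V i) v : G i)) ''
          ((fun w => (Submodule.orthogonalProjectionOnto (V i) w : G i)) '' T) := by
    intro i T
    rw [Set.image_image]
    simp only [Submodule.orthogonalProjectionOnto_mem_subspace_eq_self]
  rw [add_right_comm, add_comm, add_right_comm (A x), Set.mem_add_iff_exists_sub_mem]
  rw [Finset.sum_congr rfl fun i _ => himage i _]
  constructor
  · rintro ⟨s, hs, hR⟩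
    obtain ⟨u, hu, rfl⟩ := (Set.mem_sum_image_iff _ _ s).mp hs
    exact ⟨u, hR, hu⟩
  · rintro ⟨u, hR, hu⟩
    exact ⟨_, (Set.mem_sum_image_iff _ _ _).mpr ⟨u, hu, rfl⟩, hR⟩

lemma zero_mem_iff_isKuhnTuckerPair {Dp : ∀ i, G i → G i}
    (hDp : ∀ i x, partialInv (V i)ᗮ (D i) x = {Dp i x})
    {bigA : (E × ∀ i, G i) → Set (E × ∀ i, G i)}
    (hbigA : ∀ z, bigA z = {u | u.1 ∈ {-z₀} + A z.1 ∧
        ∀ i, u.2 i ∈ {(Submodule.orthogonalProjectionOnto (V i) (b i) : G i)}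
            + partialInv (V i)ᗮ (B i) (z.2 i)})
    {bigB : (E × ∀ i, G i) → (E × ∀ i, G i)}
    (hbigB : ∀ z, bigB z =
        (C z.1 + ∑ i, (L i).adjoint (Submodule.orthogonalProjectionOnto (V i) (z.2 i) : G i),
         fun i => Dp i (z.2 i) - (Submodule.orthogonalProjectionOnto (V i) (L i z.1) : G i)))
    {NW : (E × ∀ i, G i) → Set (E × ∀ i, G i)}
    (hNW : ∀ z, NW z = {w | (z.1 ∈ U ∧ ∀ i, z.2 i ∈ V i) ∧
        ∀ v : E × ∀ i, G i, (v.1 ∈ U ∧ ∀ i, v.2 i ∈ V i) →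
          ⟪v.1, w.1⟫ + ∑ i, ⟪v.2 i, w.2 i⟫ = 0})
    (z : E × ∀ i, G i) :
    (0 : E × ∀ i, G i) ∈ bigA z + {bigB z} + NW z ↔ IsKuhnTuckerPair U V A B D L C z₀ b z.1 z.2 := by
  classical
  obtain ⟨x, u⟩ := z
  by_cases hW : x ∈ U ∧ ∀ i, u i ∈ V i
  · have hNWxu : NW (x, u) = {w : E × ∀ i, G i | w.1 ∈ Uᗮ ∧ ∀ i, w.2 i ∈ (V i)ᗮ} := by
      ext w
      simp only [hNW, hW, implies_true, true_and, Set.mem_ofPred_eq,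
        Submodule.mem_orthogonal_prod_pi_iff]
    have hp : ∀ i, (Submodule.orthogonalProjectionOnto (V i) (L i x - b i) : G i) ∈ V i :=
      fun i => Submodule.coe_mem _
    rw [hbigA, hNWxu]
    refine (zero_mem_setOf_add_singleton_add_setOf_iff _ _ _ _ _).trans ?_
    rw [hbigB, IsKuhnTuckerPair, Submodule.normalConeSub_of_mem U hW.1]
    simp only [Submodule.normalConeSub_of_mem _ (hp _),
      Submodule.image_orthogonalProjectionOnto_add_orthogonal,
      Submodule.mem_image_partialSum_orthogonal_iff _ (hDp _) (hp _), hW.2, true_and]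
    refine and_congr ?_ (forall_congr' fun i => ?_)
    · rw [add_assoc {-z₀}, Set.mem_singleton_add_iff_sub_mem, add_right_comm (A x),
        add_comm _ {C x}, Set.mem_singleton_add_iff_sub_mem]
      convert Iff.rfl using 2
      abel
    · rw [add_assoc, Set.mem_singleton_add_iff_sub_mem]
      convert Iff.rfl using 2
      simp only [map_sub, Submodule.coe_sub]
      abel
  · have hNWxu : NW (x, u) = ∅ := by
      ext w
      simp [hNW, hW]
    rw [hNWxu, Set.add_empty]
    exact iff_of_false (Set.notMem_empty _) fun h => hW h.mem

end KuhnTucker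

variable {m : ℕ} {E : Type*} [NormedAddCommGroup E] [InnerProductSpace ℝ E]
  [CompleteSpace E]
  {G : Fin m → Type*} [∀ i, NormedAddCommGroup (G i)] [∀ i, InnerProductSpace ℝ (G i)]
  [∀ i, CompleteSpace (G i)]

theorem stmt17_general (U : Submodule ℝ E)
    (V : ∀ i, Submodule ℝ (G i)) [∀ i, CompleteSpace (V i)]
    (A : E → Set E)
    (B : ∀ i, G i → Set (G i))
    (L : ∀ i, E →L[ℝ] G i)
    (D : ∀ i, G i → Set (G i))
    (Dp : ∀ i, G i → G i)
    (hDp : ∀ i x, partialInv (V i)ᗮ (D i) x = {Dp i x})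
    (C : E → E)
    (z₀ : E) (b : ∀ i, G i)
    -- the big operators on `H = E ⊕ G₁ ⊕ ⋯ ⊕ G_m`:
    (bigA : (E × ∀ i, G i) → Set (E × ∀ i, G i))
    (hbigA : ∀ z, bigA z = {u | u.1 ∈ {-z₀} + A z.1 ∧
        ∀ i, u.2 i ∈ {(Submodule.orthogonalProjectionOnto (V i) (b i) : G i)}
            + partialInv (V i)ᗮ (B i) (z.2 i)})
    (bigB : (E × ∀ i, G i) → (E × ∀ i, G i))
    (hbigB : ∀ z, bigB z =
        (C z.1 + ∑ i, (L i).adjoint (Submodule.orthogonalProjectionOnto (V i) (z.2 i) : G i),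
         fun i => Dp i (z.2 i) - (Submodule.orthogonalProjectionOnto (V i) (L i z.1) : G i)))
    -- the normal cone to `W = U × V₁ × ⋯ × V_m` (whose orthogonal complement is
    -- taken with respect to the direct-sum inner product):
    (NW : (E × ∀ i, G i) → Set (E × ∀ i, G i))
    (hNW : ∀ z, NW z = {w | (z.1 ∈ U ∧ ∀ i, z.2 i ∈ V i) ∧
        ∀ v : E × ∀ i, G i, (v.1 ∈ U ∧ ∀ i, v.2 i ∈ V i) →
          ⟪v.1, w.1⟫ + ∑ i, ⟪v.2 i, w.2 i⟫ = 0})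
    -- the primal and dual solution sets:
    (P : Set E)
    (hP : P = {x | z₀ ∈ A x + normalConeSub U x
        + (∑ i, (fun w => (L i).adjoint (Submodule.orthogonalProjectionOnto (V i) w : G i)) ''
            (partialSum (V i)ᗮ (B i) (D i)
                (Submodule.orthogonalProjectionOnto (V i) (L i x - b i) : G i)
              + normalConeSub (V i)
                (Submodule.orthogonalProjectionOnto (V i) (L i x - b i) : G i)))
        + {C x}})
    (Dual : Set (∀ i, G i))
    (hDual : Dual = {u | ∃ x : E,
        z₀ - ∑ i, (L i).adjoint (Submodule.orthogonalProjectionOnto (V i) (u i) : G i)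
          ∈ A x + {C x} + normalConeSub U x ∧
        ∀ i, u i ∈ (fun w => (Submodule.orthogonalProjectionOnto (V i) w : G i)) ''
            (partialSum (V i)ᗮ (B i) (D i)
                (Submodule.orthogonalProjectionOnto (V i) (L i x - b i) : G i)
              + normalConeSub (V i)
                (Submodule.orthogonalProjectionOnto (V i) (L i x - b i) : G i))}) :
    (P.Nonempty ↔
      {z : E × ∀ i, G i | (0 : E × ∀ i, G i) ∈ bigA z + {bigB z} + NW z}.Nonempty) ∧
    ({z : E × ∀ i, G i | (0 : E × ∀ i, G i) ∈ bigA z + {bigB z} + NW z}.Nonempty ↔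
      Dual.Nonempty) := by
  have hZ : {z : E × ∀ i, G i | (0 : E × ∀ i, G i) ∈ bigA z + {bigB z} + NW z}.Nonempty ↔
      ∃ x u, IsKuhnTuckerPair U V A B D L C z₀ b x u := by
    simp only [Set.Nonempty, Set.mem_ofPred_eq,
      zero_mem_iff_isKuhnTuckerPair U V A B D L C z₀ b hDp hbigA hbigB hNW, Prod.exists]
  have hPrimal : P.Nonempty ↔ ∃ x u, IsKuhnTuckerPair U V A B D L C z₀ b x u := by
    simp only [hP, Set.Nonempty, Set.mem_ofPred_eq, mem_primal_iff_exists_isKuhnTuckerPair]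
  have hDual' : Dual.Nonempty ↔ ∃ x u, IsKuhnTuckerPair U V A B D L C z₀ b x u := by
    rw [hDual, exists_comm]
    rfl
  exact ⟨hPrimal.trans hZ.symm, hZ.trans hDual'.symm⟩

theorem stmt17 (U : Submodule ℝ E) [CompleteSpace U]
    (V : ∀ i, Submodule ℝ (G i)) [∀ i, CompleteSpace (V i)]
    (A : E → Set E) (hA : MaxMonotone A)
    (B : ∀ i, G i → Set (G i)) (hB : ∀ i, MaxMonotone (B i))
    (L : ∀ i, E →L[ℝ] G i)
    (D : ∀ i, G i → Set (G i)) (hD : ∀ i, MonotoneSV (D i))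
    (ν : Fin m → ℝ) (hν : ∀ i, 0 < ν i)
    (Dp : ∀ i, G i → G i)
    (hDp : ∀ i x, partialInv (V i)ᗮ (D i) x = {Dp i x})
    (hDplip : ∀ i (x y : G i), ‖Dp i x - Dp i y‖ ≤ ν i * ‖x - y‖)
    (C : E → E) (μ : ℝ) (hμ : 0 < μ)
    (hCmono : ∀ x y : E, 0 ≤ ⟪x - y, C x - C y⟫)
    (hClip : ∀ x y : E, ‖C x - C y‖ ≤ μ * ‖x - y‖)
    (z₀ : E) (b : ∀ i, G i)
    -- the big operators on `H = E ⊕ G₁ ⊕ ⋯ ⊕ G_m`: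
    (bigA : (E × ∀ i, G i) → Set (E × ∀ i, G i))
    (hbigA : ∀ z, bigA z = {u | u.1 ∈ {-z₀} + A z.1 ∧
        ∀ i, u.2 i ∈ {(Submodule.orthogonalProjectionOnto (V i) (b i) : G i)}
            + partialInv (V i)ᗮ (B i) (z.2 i)})
    (bigB : (E × ∀ i, G i) → (E × ∀ i, G i))
    (hbigB : ∀ z, bigB z =
        (C z.1 + ∑ i, (L i).adjoint (Submodule.orthogonalProjectionOnto (V i) (z.2 i) : G i),
         fun i => Dp i (z.2 i) - (Submodule.orthogonalProjectionOnto (V i) (L i z.1) : G i)))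
    -- the normal cone to `W = U × V₁ × ⋯ × V_m` (whose orthogonal complement is
    -- taken with respect to the direct-sum inner product):
    (NW : (E × ∀ i, G i) → Set (E × ∀ i, G i))
    (hNW : ∀ z, NW z = {w | (z.1 ∈ U ∧ ∀ i, z.2 i ∈ V i) ∧
        ∀ v : E × ∀ i, G i, (v.1 ∈ U ∧ ∀ i, v.2 i ∈ V i) →
          ⟪v.1, w.1⟫ + ∑ i, ⟪v.2 i, w.2 i⟫ = 0})
    -- the primal and dual solution sets:
    (P : Set E)
    (hP : P = {x | z₀ ∈ A x + normalConeSub U x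
        + (∑ i, (fun w => (L i).adjoint (Submodule.orthogonalProjectionOnto (V i) w : G i)) ''
            (partialSum (V i)ᗮ (B i) (D i)
                (Submodule.orthogonalProjectionOnto (V i) (L i x - b i) : G i)
              + normalConeSub (V i)
                (Submodule.orthogonalProjectionOnto (V i) (L i x - b i) : G i)))
        + {C x}})
    (Dual : Set (∀ i, G i))
    (hDual : Dual = {u | ∃ x : E,
        z₀ - ∑ i, (L i).adjoint (Submodule.orthogonalProjectionOnto (V i) (u i) : G i)
          ∈ A x + {C x} + normalConeSub U x ∧
        ∀ i, u i ∈ (fun w => (Submodule.orthogonalProjectionOnto (V i) w : G i)) ''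
            (partialSum (V i)ᗮ (B i) (D i)
                (Submodule.orthogonalProjectionOnto (V i) (L i x - b i) : G i)
              + normalConeSub (V i)
                (Submodule.orthogonalProjectionOnto (V i) (L i x - b i) : G i))}) :
    (P.Nonempty ↔
      {z : E × ∀ i, G i | (0 : E × ∀ i, G i) ∈ bigA z + {bigB z} + NW z}.Nonempty) ∧
    ({z : E × ∀ i, G i | (0 : E × ∀ i, G i) ∈ bigA z + {bigB z} + NW z}.Nonempty ↔
      Dual.Nonempty) :=
  stmt17_general U V A B L D Dp hDp C z₀ b bigA hbigA bigB hbigB NW hNW P hP Dual hDual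
end
end
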